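/- There is a poset that is 3-representable but not 4-representable. Specifically, in the poset of example with elements p, q, three 'upper' elements and pairs below them, no nontrivial binary joins exist, so principal up-sets provide a 3-representation, but every (4,4)-filter containing p also contains q, while p ≰ q; hence no 4-representation exists. -/
import Mathlib

open Cardinal

/-- `h : P → ℘(X)` is an `(α,β)`-representation: an order embedding sending existing
meets of nonempty sets of size `< α` to intersections and existing joins of nonempty
sets of size `< β` to unions. -/
def IsRep {P : Type} [PartialOrder P] {X : Type} (α β : Cardinal)
    (h : P → Set X) : Prop :=
  (∀ p q : P, p ≤ q ↔ h p ⊆ h q) ∧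
  (∀ S : Set P, S.Nonempty → #S < α → ∀ m, IsGLB S m → h m = ⋂ x ∈ S, h x) ∧
  (∀ S : Set P, S.Nonempty → #S < β → ∀ j, IsLUB S j → h j = ⋃ x ∈ S, h x)

/-- The example poset: bottom-ish `q`, four atoms `x i`, elements `y a b` above `x a` and
`x b`, and `p` above `q` and the `x i` (but incomparable with the `y`s). -/
inductive PP : Type
  | q | x (i : Fin 4) | y (a b : Fin 4) | p
deriving DecidableEq, Fintype

namespace PP

def ble : PP → PP → Bool
  | .q, _ => true
  | .x _, .p => true
  | .p, .p => true
  | .x i, .x j => i = j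
  | .x i, .y a b => i = a || i = b
  | .y a b, .y c d => a = c && b = d
  | _, _ => false

lemma ble_refl : ∀ a : PP, ble a a = true := by decide
lemma ble_trans : ∀ a b c : PP, ble a b = true → ble b c = true → ble a c = true := by decide
lemma ble_antisymm : ∀ a b : PP, ble a b = true → ble b a = true → a = b := by decide

instance : PartialOrder PP where
  le a b := ble a b = true
  le_refl := ble_refl
  le_trans := ble_trans
  le_antisymm := ble_antisymm

instance decLe : ∀ a b : PP, Decidable (a ≤ b) :=
  fun a b => inferInstanceAs (Decidable (ble a b = true))

lemma lub_pair_comparable : ∀ a b j : PP, a ≤ j → b ≤ j →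
    (∀ c, a ≤ c → b ≤ c → j ≤ c) → a ≤ b ∨ b ≤ a := by decide

lemma q_le : ∀ a : PP, PP.q ≤ a := by decide

lemma x_le_p : ∀ i : Fin 4, PP.x i ≤ PP.p := by decide

lemma le_p_of : ∀ (c : PP) (i j k : Fin 4), i ≠ j → i ≠ k → j ≠ k →
    PP.x i ≤ c → PP.x j ≤ c → PP.x k ≤ c → PP.p ≤ c := by decide

lemma le_q_of : ∀ (c : PP) (i j : Fin 4), i ≠ j →
    c ≤ PP.x i → c ≤ PP.x j → c ≤ PP.q := by decide

/-- The down-set map is a (3,3)-representation. -/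
def dn : PP → Set PP := fun a => {b | b ≤ a}

lemma card_small {P : Type} {S : Set P} {n : ℕ} (hcard : #S < n) : S.ncard < n := by
  have h0 : #S < ℵ₀ := hcard.trans (nat_lt_aleph0 n)
  obtain ⟨m, hm⟩ := Cardinal.lt_aleph0.mp h0
  have hmn : m < n := by
    rw [hm] at hcard; exact_mod_cast hcard
  have : S.ncard = m := by
    rw [← Nat.card_coe_set_eq, Nat.card, hm, Cardinal.toNat_natCast]
  omega

lemma rep33 : IsRep 3 3 dn := by
  refine ⟨?_, ?_, ?_⟩
  · intro a b
    constructor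
    · intro hab c hc; exact le_trans hc hab
    · intro hs; exact hs (le_refl a)
  · intro S _ _ m hm
    ext b
    simp only [dn, Set.mem_setOf_eq, Set.mem_iInter]
    constructor
    · intro hb x hx; exact le_trans hb (hm.1 hx)
    · intro hb; exact hm.2 (fun x hx => hb x hx)
  · intro S hne hcard j hj
    have hfin : S.Finite := Cardinal.lt_aleph0_iff_set_finite.mp
      (hcard.trans (by exact_mod_cast nat_lt_aleph0 3))
    have hsc := card_small (n := 3) (by exact_mod_cast hcard)
    have hne' : S.ncard ≠ 0 := by
      exact fun h0 => hne.ne_empty ((Set.ncard_eq_zero hfin).mp h0)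
    interval_cases h : S.ncard
    · omega
    · obtain ⟨a, rfl⟩ := Set.ncard_eq_one.mp h
      have hja : j = a := hj.unique isLUB_singleton
      rw [hja]
      simp
    · obtain ⟨a, b, hab, rfl⟩ := Set.ncard_eq_two.mp h
      have haj : a ≤ j := hj.1 (by simp)
      have hbj : b ≤ j := hj.1 (by simp)
      have hleast : ∀ c, a ≤ c → b ≤ c → j ≤ c := by
        intro c h1 h2
        exact hj.2 (by rintro z (rfl | rfl) <;> assumption)
      rcases lub_pair_comparable a b j haj hbj hleast with hab' | hab'
      · have hjb : j = b := le_antisymm (hleast b hab' (le_refl b)) hbj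
        rw [hjb]
        ext c
        simp only [dn, Set.mem_setOf_eq, Set.mem_iUnion]
        constructor
        · intro hc; exact ⟨b, by simp, hc⟩
        · rintro ⟨z, hz, hc⟩
          simp only [Set.mem_insert_iff, Set.mem_singleton_iff] at hz
          rcases hz with rfl | rfl
          · exact le_trans hc hab'
          · exact hc
      · have hja : j = a := le_antisymm (hleast a (le_refl a) hab') haj
        rw [hja]
        ext c
        simp only [dn, Set.mem_setOf_eq, Set.mem_iUnion]
        constructor
        · intro hc; exact ⟨a, by simp, hc⟩
        · rintro ⟨z, hz, hc⟩
          simp only [Set.mem_insert_iff, Set.mem_singleton_iff] at hz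
          rcases hz with rfl | rfl
          · exact hc
          · exact le_trans hc hab'

lemma card3_lt4 (a b c : PP) : #({a, b, c} : Set PP) < 4 := by
  have h1 : #({a, b, c} : Set PP) ≤ #({b, c} : Set PP) + 1 := Cardinal.mk_insert_le
  have h2 : #({b, c} : Set PP) ≤ #({c} : Set PP) + 1 := Cardinal.mk_insert_le
  have h3 : #({c} : Set PP) = 1 := Cardinal.mk_singleton c
  have : #({a, b, c} : Set PP) ≤ 3 := by
    calc #({a, b, c} : Set PP) ≤ #({b, c} : Set PP) + 1 := h1
      _ ≤ (#({c} : Set PP) + 1) + 1 := by gcongr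
      _ = 3 := by rw [h3]; norm_num
  calc #({a, b, c} : Set PP) ≤ 3 := this
    _ < 4 := by norm_num

lemma card2_lt4 (a b : PP) : #({a, b} : Set PP) < 4 := by
  have h2 : #({a, b} : Set PP) ≤ #({b} : Set PP) + 1 := Cardinal.mk_insert_le
  rw [Cardinal.mk_singleton] at h2
  calc #({a, b} : Set PP) ≤ 1 + 1 := h2
    _ < 4 := by norm_num

lemma not_rep44 : ¬ (∃ (X : Type) (g : PP → Set X), IsRep 4 4 g) := by
  rintro ⟨X, g, hord, hmeet, hjoin⟩
  have hpq : ¬ (PP.p ≤ PP.q) := by decide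
  have hnsub : ¬ (g PP.p ⊆ g PP.q) := fun hsub => hpq ((hord _ _).2 hsub)
  obtain ⟨t, htp, htq⟩ := Set.not_subset.1 hnsub
  -- t lands in at least one of any three x's
  have key : ∀ i j k : Fin 4, i ≠ j → i ≠ k → j ≠ k →
      t ∈ g (PP.x i) ∨ t ∈ g (PP.x j) ∨ t ∈ g (PP.x k) := by
    intro i j k hij hik hjk
    have hlub : IsLUB ({PP.x i, PP.x j, PP.x k} : Set PP) PP.p := by
      constructor
      · rintro z (rfl | rfl | rfl) <;> exact x_le_p _
      · intro c hc
        exact le_p_of c i j k hij hik hjk (hc (by simp)) (hc (by simp)) (hc (by simp))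
    have hu := hjoin _ ⟨PP.x i, by simp⟩ (card3_lt4 _ _ _) _ hlub
    rw [hu] at htp
    simp only [Set.mem_iUnion, Set.mem_insert_iff, Set.mem_singleton_iff] at htp
    obtain ⟨z, hz, hzt⟩ := htp
    rcases hz with rfl | rfl | rfl
    · exact Or.inl hzt
    · exact Or.inr (Or.inl hzt)
    · exact Or.inr (Or.inr hzt)
  -- if t is in two distinct x's, contradiction
  have pair : ∀ i j : Fin 4, i ≠ j → t ∈ g (PP.x i) → t ∈ g (PP.x j) → False := by
    intro i j hij hi hj
    have hglb : IsGLB ({PP.x i, PP.x j} : Set PP) PP.q := by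
      constructor
      · rintro z (rfl | rfl) <;> exact q_le _
      · intro c hc
        exact le_q_of c i j hij (hc (by simp)) (hc (by simp))
    have hu := hmeet _ ⟨PP.x i, by simp⟩ (card2_lt4 _ _) _ hglb
    apply htq
    rw [hu]
    simp only [Set.mem_iInter, Set.mem_insert_iff, Set.mem_singleton_iff]
    rintro z (rfl | rfl) <;> assumption
  rcases key 0 1 2 (by decide) (by decide) (by decide) with h0 | h1 | h2
  · rcases key 1 2 3 (by decide) (by decide) (by decide) with hb | hb | hb
    · exact pair 0 1 (by decide) h0 hb
    · exact pair 0 2 (by decide) h0 hb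
    · exact pair 0 3 (by decide) h0 hb
  · rcases key 0 2 3 (by decide) (by decide) (by decide) with hb | hb | hb
    · exact pair 1 0 (by decide) h1 hb
    · exact pair 1 2 (by decide) h1 hb
    · exact pair 1 3 (by decide) h1 hb
  · rcases key 0 1 3 (by decide) (by decide) (by decide) with hb | hb | hb
    · exact pair 2 0 (by decide) h2 hb
    · exact pair 2 1 (by decide) h2 hb
    · exact pair 2 3 (by decide) h2 hb

end PP

/-- There is a poset that is `3`-representable (i.e. `(3,3)`-representable)
but not `4`-representable (i.e. not `(4,4)`-representable). -/
theorem exists_poset_three_rep_not_four_rep :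
    ∃ (P : Type) (_ : PartialOrder P),
      (∃ (X : Type) (h : P → Set X), IsRep 3 3 h) ∧
      ¬ (∃ (X : Type) (h : P → Set X), IsRep 4 4 h) := by
  exact ⟨PP, inferInstance, ⟨PP, PP.dn, PP.rep33⟩, PP.not_rep44⟩
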